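/- arXiv:1707.07730 — 2 statements merged into one kernel-verified Lean document; each statement's English description precedes it below -/
import Mathlib

section
/- Let φ be the substitution on {0,1} with φ(0) = 1, φ(1) = 100, and let φ^∞(1) = lim_{n→∞} φ^n(1) be its infinite fixed point. The Lyndon system M(φ^∞(1)) associated to the alternate Lyndon word φ^∞(1) has topological entropy zero. -/
open Filter Topology

/-- Alternate (Ito–Sadahiro) strict order on infinite sequences (0-indexed: entry `i`
is the `(i+1)`-th letter `x_{i+1}` of the paper). `altLt x y` iff at the first index
where they differ the comparison alternates with the parity of the index:
`(-1)^k (x_k - y_k) < 0` in 1-based indexing. -/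
def altLt (x y : ℕ → ℕ) : Prop :=
  ∃ k : ℕ, (∀ i < k, x i = y i) ∧ (if Even k then y k < x k else x k < y k)

def altLe (x y : ℕ → ℕ) : Prop := x = y ∨ altLt x y

def shiftSeq (x : ℕ → ℕ) (k : ℕ) : ℕ → ℕ := fun i => x (k + i)

/-- An alternate Lyndon word: smaller (in the alternate order) than all of its shifts. -/
def IsAltLyndon (d : ℕ → ℕ) : Prop := ∀ k : ℕ, altLe d (shiftSeq d k)

/-- The Lyndon system associated to `d`: sequences over the alphabet `{0, …, d_1}`
all of whose shifts dominate `d` in the alternate order. -/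
def LyndonSystem (d : ℕ → ℕ) : Set (ℕ → ℕ) :=
  {x | (∀ i, x i ≤ d 0) ∧ ∀ k : ℕ, altLe d (shiftSeq x k)}

def IsFactorOf (w : List ℕ) (x : ℕ → ℕ) : Prop :=
  ∃ k : ℕ, w = (List.range w.length).map (fun i => x (k + i))

/-- The language of the Lyndon system: finite factors of its elements. -/
def LyndonLang (d : ℕ → ℕ) : Set (List ℕ) :=
  {w | ∃ x ∈ LyndonSystem d, IsFactorOf w x}

/-- `Hword d n` is the number of words of length `n` in the language `L_M`. -/
noncomputable def Hword (d : ℕ → ℕ) (n : ℕ) : ℕ :=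
  Set.ncard {w : List ℕ | w ∈ LyndonLang d ∧ w.length = n}

/-- The topological entropy of the Lyndon system of `d` equals `h`,
i.e. `lim_{n→∞} (log H_n)/n = h`. -/
def EntropyIs (d : ℕ → ℕ) (h : ℝ) : Prop :=
  Filter.Tendsto (fun n : ℕ => Real.log (Hword d n) / n) Filter.atTop (nhds h)

/-- The substitution `φ` on letters: `φ(0) = 1`, `φ(1) = 100`. -/
def phiL (a : ℕ) : List ℕ := if a = 0 then [1] else [1, 0, 0]
/-- `φ` extended to words. -/
def phiW (w : List ℕ) : List ℕ := w.flatMap phiL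
/-- `uW n = φ^n(1)`. -/
def uW (n : ℕ) : List ℕ := phiW^[n] [1]
/-- The infinite fixed point `φ^∞(1)` (each `uW n` is a prefix of `uW (n+1)`,
and `|uW (i+1)| > i`, so the definition below gives the limit word). -/
def phiInf : ℕ → ℕ := fun i => (uW (i + 1)).getD i 0

/-!
Every sequence of `M(φ^∞(1))` beginning with `1` is the image under `φ` of another sequence of
`M(φ^∞(1))`: the forbidden factors `101` and `1000` let it be cut into blocks `1 = φ(0)` and
`100 = φ(1)`, and the preimage stays in the system because `φ` is increasing for the alternate
order and fixes `φ^∞(1)`. Hence every word `w` of the language is `0^a φ(v) p` with `v` in the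
language, `p ∈ {ε, 1, 10}` and `3 μ(v) ≤ 2 μ(w)` for the weight `μ(w) = |w| + 2 |w|₁`.
Iterating, at most `(3N + 3)^O(log N)` words have weight at most `N`, so `log H_n = O(log² n)`.
-/

lemma phiL_length (a : ℕ) : (phiL a).length = if a = 0 then 1 else 3 := by
  unfold phiL; split <;> rfl

lemma phiL_length_pos (a : ℕ) : 0 < (phiL a).length := by
  rw [phiL_length]; split <;> omega

lemma phiL_getD_zero (a : ℕ) : (phiL a).getD 0 0 = 1 := by
  unfold phiL; split <;> rfl

lemma phiW_append (u v : List ℕ) : phiW (u ++ v) = phiW u ++ phiW v :=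
  List.flatMap_append

lemma phiW_singleton (a : ℕ) : phiW [a] = phiL a := by
  simp [phiW]

lemma List.IsPrefix.phiW {u v : List ℕ} (h : u <+: v) : phiW u <+: phiW v := by
  obtain ⟨t, rfl⟩ := h
  rw [phiW_append]
  exact List.prefix_append _ _

lemma length_le_length_phiW (u : List ℕ) : u.length ≤ (phiW u).length := by
  induction u with
  | nil => rfl
  | cons a t ih =>
    simp only [phiW, List.flatMap_cons, List.length_append, List.length_cons] at ih ⊢
    have := phiL_length_pos a
    omega

lemma getD_of_prefix {u v : List ℕ} (h : u <+: v) {i : ℕ} (hi : i < u.length) :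
    v.getD i 0 = u.getD i 0 := by
  obtain ⟨t, rfl⟩ := h
  exact List.getD_append _ _ _ _ hi

def seqPrefix (x : ℕ → ℕ) (n : ℕ) : List ℕ := (List.range n).map x

@[simp]
lemma length_seqPrefix (x : ℕ → ℕ) (n : ℕ) : (seqPrefix x n).length = n := by
  simp [seqPrefix]

@[simp]
lemma getElem_seqPrefix (x : ℕ → ℕ) {n i : ℕ} (hi : i < (seqPrefix x n).length) :
    (seqPrefix x n)[i] = x i := by
  simp [seqPrefix]

lemma seqPrefix_add (x : ℕ → ℕ) (m n : ℕ) :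
    seqPrefix x (m + n) = seqPrefix x m ++ seqPrefix (shiftSeq x m) n := by
  simp [seqPrefix, List.range_add, shiftSeq, Function.comp_def]

lemma seqPrefix_succ (x : ℕ → ℕ) (n : ℕ) :
    seqPrefix x (n + 1) = seqPrefix x n ++ [x n] := by
  simp [seqPrefix, List.range_succ]

lemma seqPrefix_prefix (x : ℕ → ℕ) {m n : ℕ} (h : m ≤ n) :
    seqPrefix x m <+: seqPrefix x n := by
  obtain ⟨k, rfl⟩ := Nat.exists_eq_add_of_le h
  rw [seqPrefix_add]
  exact List.prefix_append _ _

lemma seqPrefix_congr {x y : ℕ → ℕ} {n : ℕ} (h : ∀ i < n, x i = y i) :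
    seqPrefix x n = seqPrefix y n :=
  List.map_congr_left fun i hi => h i (List.mem_range.mp hi)

/-- `φ(z)`: its `i`-th letter is already determined by `φ` of the first `i + 1` letters of `z`. -/
def phiSeq (z : ℕ → ℕ) (i : ℕ) : ℕ := (phiW (seqPrefix z (i + 1))).getD i 0

/-- Position in `φ(z)` of the block `φ(z k)`. -/
def blockStart (z : ℕ → ℕ) (k : ℕ) : ℕ := (phiW (seqPrefix z k)).length

section Blocks

variable (z : ℕ → ℕ)

lemma blockStart_zero : blockStart z 0 = 0 := rfl

lemma blockStart_succ (k : ℕ) : blockStart z (k + 1) = blockStart z k + (phiL (z k)).length := by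
  simp [blockStart, seqPrefix_succ, phiW_append, phiW_singleton]

lemma blockStart_strictMono : StrictMono (blockStart z) :=
  strictMono_nat_of_lt_succ fun k => by
    rw [blockStart_succ]; have := phiL_length_pos (z k); omega

lemma exists_blockStart_le_lt (i : ℕ) :
    ∃ k, blockStart z k ≤ i ∧ i < blockStart z (k + 1) := by
  induction i with
  | zero => exact ⟨0, le_rfl, blockStart_strictMono z (Nat.zero_lt_one)⟩
  | succ i ih =>
    obtain ⟨k, hk, hik⟩ := ih
    rcases Nat.lt_or_ge (i + 1) (blockStart z (k + 1)) with h | h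
    · exact ⟨k, by omega, h⟩
    · exact ⟨k + 1, h, by have := blockStart_strictMono z (Nat.lt_add_one (k + 1)); omega⟩

lemma phiSeq_eq_getD {i k : ℕ} (hi : i < blockStart z k) :
    phiSeq z i = (phiW (seqPrefix z k)).getD i 0 := by
  have hi' : i < blockStart z (i + 1) := (blockStart_strictMono z).id_le (i + 1)
  rcases le_total (i + 1) k with hk | hk
  · exact (getD_of_prefix (seqPrefix_prefix z hk).phiW hi').symm
  · exact getD_of_prefix (seqPrefix_prefix z hk).phiW hi

lemma seqPrefix_phiSeq {m k : ℕ} (h : m ≤ blockStart z k) :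
    seqPrefix (phiSeq z) m = (phiW (seqPrefix z k)).take m := by
  refine List.ext_getElem (by simpa [blockStart] using h) fun i hi _ => ?_
  rw [length_seqPrefix] at hi
  rw [getElem_seqPrefix, List.getElem_take, phiSeq_eq_getD z (hi.trans_le h),
    List.getD_eq_getElem]

lemma blockStart_add (k n : ℕ) :
    blockStart z (k + n) = blockStart z k + blockStart (shiftSeq z k) n := by
  simp only [blockStart, seqPrefix_add, phiW_append, List.length_append]

lemma seqPrefix_phiSeq_eq_append {j m : ℕ} (hj : blockStart z j ≤ m)
    (hm : m ≤ blockStart z (j + 1)) :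
    seqPrefix (phiSeq z) m = phiW (seqPrefix z j) ++ (phiL (z j)).take (m - blockStart z j) := by
  obtain ⟨r, rfl⟩ := Nat.exists_eq_add_of_le hj
  rw [seqPrefix_phiSeq z hm, seqPrefix_succ, phiW_append, phiW_singleton, Nat.add_sub_cancel_left]
  exact List.take_length_add_append r

lemma phiSeq_blockStart_add {k o : ℕ} (ho : o < (phiL (z k)).length) :
    phiSeq z (blockStart z k + o) = (phiL (z k)).getD o 0 := by
  rw [phiSeq_eq_getD z (k := k + 1) (by rw [blockStart_succ]; omega), seqPrefix_succ,
    phiW_append, phiW_singleton,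
    List.getD_append_right _ _ _ (blockStart z k + o) (Nat.le_add_right _ _)]
  simp [blockStart]

lemma phiSeq_blockStart (k : ℕ) : phiSeq z (blockStart z k) = 1 := by
  have h := phiSeq_blockStart_add z (phiL_length_pos (z k))
  rwa [Nat.add_zero, phiL_getD_zero] at h

lemma phiSeq_blockStart_add_one {k : ℕ} (hk : z k ≤ 1) :
    phiSeq z (blockStart z k + 1) = 1 - z k := by
  rcases Nat.le_one_iff_eq_zero_or_eq_one.mp hk with h | h
  · have hnext : blockStart z k + 1 = blockStart z (k + 1) := by rw [blockStart_succ, h]; rfl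
    rw [hnext, phiSeq_blockStart, h]
  · rw [phiSeq_blockStart_add z (by rw [h]; decide), h]
    rfl

lemma even_blockStart_iff (k : ℕ) : Even (blockStart z k) ↔ Even k := by
  induction k with
  | zero => simp [blockStart_zero]
  | succ k ih =>
    have hodd : ¬Even (phiL (z k)).length := by rw [phiL_length]; split <;> decide
    rw [blockStart_succ, Nat.even_add, ih, Nat.even_add_one]
    tauto

lemma shiftSeq_phiSeq (k : ℕ) : shiftSeq (phiSeq z) (blockStart z k) = phiSeq (shiftSeq z k) := by
  funext i
  have hi : blockStart z k + i < blockStart z (k + (i + 1)) := by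
    rw [blockStart_add]
    have : i + 1 ≤ blockStart (shiftSeq z k) (i + 1) :=
      (blockStart_strictMono (shiftSeq z k)).id_le (i + 1)
    omega
  rw [shiftSeq, phiSeq_eq_getD z hi, seqPrefix_add, phiW_append,
    List.getD_append_right _ _ _ (blockStart z k + i) (Nat.le_add_right _ _)]
  simp [blockStart, phiSeq]

lemma phiSeq_congr {u : ℕ → ℕ} {k i : ℕ} (h : ∀ j < k, z j = u j)
    (hi : i < blockStart z k) :
    phiSeq z i = phiSeq u i := by
  have hk : blockStart z k = blockStart u k := by rw [blockStart, blockStart, seqPrefix_congr h]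
  rw [phiSeq_eq_getD z hi, phiSeq_eq_getD u (hk ▸ hi), seqPrefix_congr h]

lemma eq_phiSeq_of_blocks {y : ℕ → ℕ}
    (h : ∀ k, ∀ o < (phiL (z k)).length, y (blockStart z k + o) = (phiL (z k)).getD o 0) :
    y = phiSeq z := by
  funext i
  obtain ⟨k, hk, hik⟩ := exists_blockStart_le_lt z i
  obtain ⟨o, rfl⟩ := Nat.exists_eq_add_of_le hk
  rw [blockStart_succ] at hik
  rw [h k o (by omega), phiSeq_blockStart_add z (by omega)]

end Blocks

section FixedPoint

lemma uW_succ (n : ℕ) : uW (n + 1) = phiW (uW n) :=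
  Function.iterate_succ_apply' phiW n [1]

lemma exists_uW_eq_cons (n : ℕ) : ∃ t, uW n = 1 :: t := by
  induction n with
  | zero => exact ⟨[], rfl⟩
  | succ n ih =>
    obtain ⟨t, ht⟩ := ih
    exact ⟨[0, 0] ++ phiW t, by rw [uW_succ, ht]; rfl⟩

lemma lt_length_uW (n : ℕ) : n < (uW n).length := by
  induction n with
  | zero => exact Nat.zero_lt_one
  | succ n ih =>
    obtain ⟨t, ht⟩ := exists_uW_eq_cons n
    have hphi : phiW (1 :: t) = [1, 0, 0] ++ phiW t := rfl
    have := length_le_length_phiW t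
    rw [uW_succ, ht, hphi]
    rw [ht] at ih
    simp only [List.length_append, List.length_cons] at ih ⊢
    omega

lemma uW_prefix_uW_succ (n : ℕ) : uW n <+: uW (n + 1) := by
  induction n with
  | zero => exact ⟨[0, 0], rfl⟩
  | succ n ih => rw [uW_succ, uW_succ (n + 1)]; exact ih.phiW

lemma uW_prefix_uW {m n : ℕ} (h : m ≤ n) : uW m <+: uW n := by
  induction n, h using Nat.le_induction with
  | base => exact List.prefix_refl _
  | succ n _ ih => exact ih.trans (uW_prefix_uW_succ n)

lemma phiInf_eq_getD {i m : ℕ} (h : i < m) : phiInf i = (uW m).getD i 0 :=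
  (getD_of_prefix (uW_prefix_uW h) (Nat.lt_of_succ_lt (lt_length_uW (i + 1)))).symm

lemma seqPrefix_phiInf {n m : ℕ} (h : n ≤ m) : seqPrefix phiInf n = (uW m).take n := by
  refine List.ext_getElem (by simpa using (h.trans (lt_length_uW m).le)) fun i hi _ => ?_
  rw [length_seqPrefix] at hi
  rw [getElem_seqPrefix, List.getElem_take, phiInf_eq_getD (hi.trans_le h), List.getD_eq_getElem]

lemma phiSeq_phiInf : phiSeq phiInf = phiInf := by
  funext i
  have hpre : phiW ((uW (i + 1)).take (i + 1)) <+: uW (i + 2) :=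
    uW_succ (i + 1) ▸ (List.take_prefix _ _).phiW
  have hlen : i < (phiW ((uW (i + 1)).take (i + 1))).length := by
    have := length_le_length_phiW ((uW (i + 1)).take (i + 1))
    have := lt_length_uW (i + 1)
    simp only [List.length_take] at *
    omega
  rw [phiSeq, seqPrefix_phiInf le_rfl, ← getD_of_prefix hpre hlen,
    phiInf_eq_getD (m := i + 2) (by omega)]

lemma uW_le_one (n : ℕ) : ∀ a ∈ uW n, a ≤ 1 := by
  induction n with
  | zero => simp [uW]
  | succ n ih =>
    intro a ha
    rw [uW_succ, phiW, List.mem_flatMap] at ha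
    obtain ⟨b, -, hb⟩ := ha
    unfold phiL at hb
    split at hb <;> simp only [List.mem_cons, List.not_mem_nil, or_false] at hb <;> omega

lemma phiInf_le_one (i : ℕ) : phiInf i ≤ 1 := by
  rw [phiInf, List.getD_eq_getElem?_getD]
  cases h : (uW (i + 1))[i]? with
  | none => exact Nat.zero_le 1
  | some a => exact uW_le_one _ a (List.mem_of_getElem? h)

lemma phiInf_zero : phiInf 0 = 1 := by decide
lemma phiInf_one : phiInf 1 = 0 := by decide
lemma phiInf_two : phiInf 2 = 0 := by decide
lemma phiInf_three : phiInf 3 = 1 := by decide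

end FixedPoint

section AltOrder

lemma altLt_asymm {x y : ℕ → ℕ} (hxy : altLt x y) : ¬altLt y x := by
  rintro ⟨l, hl, hyx⟩
  obtain ⟨k, hk, hxy⟩ := hxy
  rcases lt_trichotomy k l with h | rfl | h
  · have := hl k h
    split_ifs at hxy <;> omega
  · split_ifs at hxy hyx <;> omega
  · have := hk l h
    split_ifs at hyx <;> omega

lemma altLt_irrefl (x : ℕ → ℕ) : ¬altLt x x := fun h => altLt_asymm h h

lemma altLt_of_not_altLe {x y : ℕ → ℕ} (h : ¬altLe x y) : altLt y x := by
  have hne : ∃ k, y k ≠ x k := by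
    by_contra! hc
    exact h (Or.inl (funext hc).symm)
  classical
  refine ⟨Nat.find hne, fun i hi => not_not.mp (Nat.find_min hne hi), ?_⟩
  have hfind := Nat.find_spec hne
  have hnot : ¬altLt x y := fun hlt => h (Or.inr hlt)
  contrapose! hnot
  refine ⟨Nat.find hne, fun i hi => (not_not.mp (Nat.find_min hne hi)).symm, ?_⟩
  split_ifs at hnot ⊢ <;> omega

lemma altLe.letter_of_eqOn {x y : ℕ → ℕ} (h : altLe x y) {k : ℕ}
    (hk : ∀ i < k, x i = y i) :
    if Even k then y k ≤ x k else x k ≤ y k := by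
  rcases h with rfl | ⟨l, hl, hxy⟩
  · split_ifs <;> exact le_rfl
  rcases lt_trichotomy k l with h | rfl | h
  · rw [hl k h]; split_ifs <;> exact le_rfl
  · split_ifs at hxy ⊢ <;> omega
  · have := hk l h
    split_ifs at hxy <;> omega

/-- `φ` is increasing for the alternate order: at the first differing letter `k` the images
differ right after the common block start, whose parity is that of `k`, and there `φ(a)` has
the letter `1 - a`. -/
lemma altLt_phiSeq {u v : ℕ → ℕ} (hu : ∀ i, u i ≤ 1) (hv : ∀ i, v i ≤ 1)
    (h : altLt u v) : altLt (phiSeq u) (phiSeq v) := by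
  obtain ⟨k, hagree, hk⟩ := h
  have hstart : blockStart u k = blockStart v k := by
    simp only [blockStart, seqPrefix_congr hagree]
  refine ⟨blockStart u k + 1, fun i hi => ?_, ?_⟩
  · rcases Nat.lt_succ_iff_lt_or_eq.mp hi with hi | rfl
    · exact phiSeq_congr u hagree hi
    · rw [phiSeq_blockStart, hstart, phiSeq_blockStart]
  · rw [phiSeq_blockStart_add_one u (hu k), hstart, phiSeq_blockStart_add_one v (hv k)]
    simp only [Nat.even_add_one, even_blockStart_iff]
    have := hu k
    have := hv k
    split_ifs at hk ⊢ <;> omega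

lemma altLe_of_altLe_phiSeq {d u : ℕ → ℕ} (hd : ∀ i, d i ≤ 1) (hfix : phiSeq d = d)
    (hu : ∀ i, u i ≤ 1) (h : altLe d (phiSeq u)) : altLe d u := by
  by_contra hdu
  have hlt := altLt_phiSeq hu hd (altLt_of_not_altLe hdu)
  rw [hfix] at hlt
  rcases h with h | h
  · exact altLt_irrefl _ (h ▸ hlt)
  · exact altLt_asymm h hlt

end AltOrder

section LyndonSystem

lemma shiftSeq_mem_lyndonSystem {d x : ℕ → ℕ} (hx : x ∈ LyndonSystem d) (k : ℕ) :
    shiftSeq x k ∈ LyndonSystem d :=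
  ⟨fun i => hx.1 (k + i), fun j => by
    convert hx.2 (k + j) using 1
    funext i
    simp [shiftSeq, Nat.add_assoc]⟩

lemma seqPrefix_mem_lyndonLang {d x : ℕ → ℕ} (hx : x ∈ LyndonSystem d) (n : ℕ) :
    seqPrefix x n ∈ LyndonLang d :=
  ⟨x, hx, 0, by simp [seqPrefix]⟩

lemma exists_eq_seqPrefix_of_mem_lyndonLang {d : ℕ → ℕ} {w : List ℕ}
    (hw : w ∈ LyndonLang d) :
    ∃ y ∈ LyndonSystem d, w = seqPrefix y w.length := by
  obtain ⟨x, hx, k, hw⟩ := hw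
  exact ⟨shiftSeq x k, shiftSeq_mem_lyndonSystem hx k, hw⟩

variable {y : ℕ → ℕ}

lemma le_one_of_mem_lyndonSystem (hy : y ∈ LyndonSystem phiInf) (i : ℕ) : y i ≤ 1 :=
  phiInf_zero ▸ hy.1 i

/-- Since `φ^∞(1)` begins with `1001`, the factors `101` and `1000` are forbidden. -/
lemma eq_zero_and_eq_one_of_one_zero (hy : y ∈ LyndonSystem phiInf) {j : ℕ} (h1 : y j = 1)
    (h2 : y (j + 1) = 0) : y (j + 2) = 0 ∧ y (j + 3) = 1 := by
  have hle := hy.2 j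
  have hy2 : y (j + 2) = 0 := by
    have h := hle.letter_of_eqOn (k := 2) fun i hi => by
      interval_cases i <;> simp [shiftSeq, phiInf_zero, phiInf_one, h1, h2]
    rw [if_pos (by decide)] at h
    simpa [shiftSeq, phiInf_two] using h
  refine ⟨hy2, ?_⟩
  have h := hle.letter_of_eqOn (k := 3) fun i hi => by
    interval_cases i <;> simp [shiftSeq, phiInf_zero, phiInf_one, phiInf_two, h1, h2, hy2]
  rw [if_neg (by decide)] at h
  simp only [shiftSeq, phiInf_three] at h
  have := le_one_of_mem_lyndonSystem hy (j + 3)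
  omega

/-- Block positions of the parsing of `y` into the blocks `1 = φ(0)` and `100 = φ(1)`. -/
def desubStart (y : ℕ → ℕ) : ℕ → ℕ
  | 0 => 0
  | k + 1 => desubStart y k + if y (desubStart y k + 1) = 1 then 1 else 3

def desub (y : ℕ → ℕ) (k : ℕ) : ℕ := if y (desubStart y k + 1) = 1 then 0 else 1

lemma desub_le_one (k : ℕ) : desub y k ≤ 1 := by
  unfold desub; split <;> omega

lemma blockStart_desub (k : ℕ) : blockStart (desub y) k = desubStart y k := by
  induction k with
  | zero => rfl
  | succ k ih =>
    rw [blockStart_succ, ih, desubStart, desub]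
    split <;> rfl

lemma eq_phiSeq_desub (hy : y ∈ LyndonSystem phiInf) (h0 : y 0 = 1) : y = phiSeq (desub y) := by
  have hb := le_one_of_mem_lyndonSystem hy
  have hstart : ∀ k, y (desubStart y k) = 1 := by
    intro k
    induction k with
    | zero => exact h0
    | succ k ih =>
      rw [desubStart]
      split_ifs with h
      · exact h
      · exact (eq_zero_and_eq_one_of_one_zero hy ih (by have := hb (desubStart y k + 1); omega)).2
  refine eq_phiSeq_of_blocks _ fun k o ho => ?_
  rw [blockStart_desub]
  unfold desub at ho ⊢
  split_ifs at ho ⊢ with h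
  · obtain rfl : o = 0 := by simpa [phiL] using ho
    exact hstart k
  · have h1 : y (desubStart y k + 1) = 0 := by have := hb (desubStart y k + 1); omega
    have h2 := (eq_zero_and_eq_one_of_one_zero hy (hstart k) h1).1
    replace ho : o < 3 := ho
    interval_cases o
    exacts [hstart k, h1, h2]

lemma desub_mem_lyndonSystem (hy : y ∈ LyndonSystem phiInf) (h0 : y 0 = 1) :
    desub y ∈ LyndonSystem phiInf := by
  refine ⟨fun i => phiInf_zero ▸ desub_le_one i, fun k => ?_⟩
  refine altLe_of_altLe_phiSeq phiInf_le_one phiSeq_phiInf (fun i => desub_le_one (k + i)) ?_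
  rw [← shiftSeq_phiSeq, ← eq_phiSeq_desub hy h0, blockStart_desub]
  exact hy.2 _

end LyndonSystem

section Decomposition

def partialBlocks : Finset (List ℕ) := {[], [1], [1, 0]}

lemma take_phiL_mem_partialBlocks (a : ℕ) {r : ℕ} (hr : r < (phiL a).length) :
    (phiL a).take r ∈ partialBlocks := by
  unfold phiL at hr ⊢
  split_ifs at hr ⊢ <;> simp only [List.length_cons, List.length_nil] at hr <;>
    interval_cases r <;> decide

lemma exists_seqPrefix_phiSeq_eq (z : ℕ → ℕ) (m : ℕ) :
    ∃ j, ∃ p ∈ partialBlocks, seqPrefix (phiSeq z) m = phiW (seqPrefix z j) ++ p := by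
  obtain ⟨j, hj, hm⟩ := exists_blockStart_le_lt z m
  rw [blockStart_succ] at hm
  exact ⟨j, _, take_phiL_mem_partialBlocks (z j) (by omega),
    seqPrefix_phiSeq_eq_append z hj (by rw [blockStart_succ]; omega)⟩

lemma seqPrefix_zero_eq_replicate {y : ℕ → ℕ} {n : ℕ} (h : ∀ i < n, y i = 0) :
    seqPrefix y n = List.replicate n 0 := by
  rw [seqPrefix_congr h]
  simp [seqPrefix]

lemma exists_seqPrefix_eq_replicate_append {y : ℕ → ℕ} (hy : y ∈ LyndonSystem phiInf)
    (n : ℕ) :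
    ∃ a, ∃ v ∈ LyndonLang phiInf, ∃ p ∈ partialBlocks,
      seqPrefix y n = List.replicate a 0 ++ phiW v ++ p := by
  by_cases hzero : ∀ i < n, y i = 0
  · refine ⟨n, [], ⟨y, hy, 0, rfl⟩, [], by decide, ?_⟩
    simp [seqPrefix_zero_eq_replicate hzero, phiW]
  push Not at hzero
  classical
  set a := Nat.find hzero
  have ha : a < n ∧ y a ≠ 0 := Nat.find_spec hzero
  have hbefore : ∀ i < a, y i = 0 := fun i hi => by
    have := Nat.find_min hzero hi
    omega
  have hy' := shiftSeq_mem_lyndonSystem hy a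
  have hy'0 : shiftSeq y a 0 = 1 := by
    have := le_one_of_mem_lyndonSystem hy a
    simp only [shiftSeq, Nat.add_zero]
    omega
  obtain ⟨j, p, hp, hpre⟩ := exists_seqPrefix_phiSeq_eq (desub (shiftSeq y a)) (n - a)
  refine ⟨a, _, seqPrefix_mem_lyndonLang (desub_mem_lyndonSystem hy' hy'0) j, p, hp, ?_⟩
  have hsplit := seqPrefix_add y a (n - a)
  rw [Nat.add_sub_cancel' ha.1.le] at hsplit
  rw [hsplit, seqPrefix_zero_eq_replicate hbefore, List.append_assoc, ← hpre,
    ← eq_phiSeq_desub hy' hy'0]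

lemma exists_eq_replicate_append_of_mem_lyndonLang {w : List ℕ} (hw : w ∈ LyndonLang phiInf) :
    ∃ a, ∃ v ∈ LyndonLang phiInf, ∃ p ∈ partialBlocks,
      w = List.replicate a 0 ++ phiW v ++ p := by
  obtain ⟨y, hy, hw⟩ := exists_eq_seqPrefix_of_mem_lyndonLang hw
  rw [hw]
  exact exists_seqPrefix_eq_replicate_append hy _

lemma le_one_of_mem_lyndonLang {w : List ℕ} (hw : w ∈ LyndonLang phiInf) :
    ∀ a ∈ w, a ≤ 1 := by
  obtain ⟨y, hy, hw⟩ := exists_eq_seqPrefix_of_mem_lyndonLang hw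
  intro a ha
  rw [hw, seqPrefix, List.mem_map] at ha
  obtain ⟨i, -, rfl⟩ := ha
  exact le_one_of_mem_lyndonSystem hy i

end Decomposition

section Weight

/-- For binary `w` this is `|φ(w)|`; it contracts by the factor `2/3` under desubstitution. -/
def weight (w : List ℕ) : ℕ := w.length + 2 * w.count 1

lemma weight_append (u v : List ℕ) : weight (u ++ v) = weight u + weight v := by
  simp only [weight, List.length_append, List.count_append]
  ring

lemma weight_phiW {v : List ℕ} (hv : ∀ a ∈ v, a ≤ 1) :
    weight (phiW v) = weight v + 2 * v.length := by
  induction v with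
  | nil => rfl
  | cons a t ih =>
    have ht := ih fun b hb => hv b (List.mem_cons_of_mem a hb)
    have ha : a = 0 ∨ a = 1 := by have := hv a List.mem_cons_self; omega
    rw [show a :: t = [a] ++ t from rfl, phiW_append, weight_append, weight_append, ht,
      phiW_singleton]
    rcases ha with rfl | rfl <;> simp [weight, phiL] <;> ring

lemma three_mul_weight_le {v w p : List ℕ} {a : ℕ} (hv : ∀ b ∈ v, b ≤ 1)
    (hw : w = List.replicate a 0 ++ phiW v ++ p) : 3 * weight v ≤ 2 * weight w := by
  have hcount : v.count 1 ≤ v.length := List.count_le_length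
  rw [hw, weight_append, weight_append, weight_phiW hv]
  simp only [weight] at *
  omega

end Weight

section Counting

def langOfWeight (N : ℕ) : Set (List ℕ) := {w | w ∈ LyndonLang phiInf ∧ weight w ≤ N}

lemma finite_setOf_le_one_length_le (N : ℕ) :
    {w : List ℕ | w.length ≤ N ∧ ∀ a ∈ w, a ≤ 1}.Finite := by
  refine ((List.finite_length_le (Fin 2) N).image (List.map Fin.val)).subset ?_
  rintro w ⟨hl, hb⟩
  refine ⟨w.pmap (fun a ha => (⟨a, Nat.lt_succ_of_le ha⟩ : Fin 2)) hb, by simpa using hl,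
    ?_⟩
  simp [List.map_pmap]

lemma finite_langOfWeight (N : ℕ) : (langOfWeight N).Finite :=
  (finite_setOf_le_one_length_le N).subset fun w ⟨hw, hN⟩ =>
    ⟨by simp only [weight] at hN; omega, le_one_of_mem_lyndonLang hw⟩

lemma langOfWeight_subset_image (N : ℕ) :
    langOfWeight N ⊆
      (fun t : ℕ × List ℕ × List ℕ => List.replicate t.1 0 ++ phiW t.2.1 ++ t.2.2) ''
        ((Finset.range (N + 1) : Set ℕ) ×ˢ langOfWeight (2 * N / 3) ×ˢ
          (partialBlocks : Set (List ℕ))) := by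
  rintro w ⟨hw, hN⟩
  obtain ⟨a, v, hv, p, hp, rfl⟩ := exists_eq_replicate_append_of_mem_lyndonLang hw
  have hweight := three_mul_weight_le (a := a) (p := p) (le_one_of_mem_lyndonLang hv) rfl
  have ha : a ≤ weight (List.replicate a 0 ++ phiW v ++ p) := by
    simp only [weight, List.length_append, List.length_replicate]
    omega
  exact ⟨(a, v, p), ⟨by simp only [Finset.coe_range, Set.mem_Iio]; omega,
    ⟨hv, show weight v ≤ 2 * N / 3 by omega⟩, hp⟩, rfl⟩

lemma ncard_langOfWeight_le (N : ℕ) :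
    (langOfWeight N).ncard ≤ (N + 1) * ((langOfWeight (2 * N / 3)).ncard * 3) := by
  have hfin : ((Finset.range (N + 1) : Set ℕ) ×ˢ langOfWeight (2 * N / 3) ×ˢ
      (partialBlocks : Set (List ℕ))).Finite :=
    (Set.toFinite _).prod ((finite_langOfWeight _).prod (Set.toFinite _))
  calc (langOfWeight N).ncard
      ≤ _ := Set.ncard_le_ncard (langOfWeight_subset_image N) (hfin.image _)
    _ ≤ _ := Set.ncard_image_le hfin
    _ = (N + 1) * ((langOfWeight (2 * N / 3)).ncard * 3) := by
      simp only [Set.ncard_prod, Set.ncard_coe_finset, Finset.card_range]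
      rfl

/-- Each step `N ↦ ⌊2N/3⌋` of the recursion `ncard_langOfWeight_le` costs a factor `3N + 3`,
and `m` steps reach `0` as soon as `N (2/3)^m < 1`. -/
lemma ncard_langOfWeight_le_pow {N m : ℕ} (h : N * 2 ^ m < 3 ^ m) :
    (langOfWeight N).ncard ≤ (3 * N + 3) ^ m := by
  induction m generalizing N with
  | zero =>
    have hN : N = 0 := by simpa using h
    subst hN
    calc (langOfWeight 0).ncard ≤ ({[]} : Set (List ℕ)).ncard :=
          Set.ncard_le_ncard (fun w ⟨_, hw⟩ => by simp only [weight] at hw; simp_all)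
      _ = (3 * 0 + 3) ^ 0 := Set.ncard_singleton _
  | succ m ih =>
    have hM : 2 * N / 3 * 2 ^ m < 3 ^ m := by
      refine Nat.lt_of_mul_lt_mul_left (a := 3) ?_
      calc 3 * (2 * N / 3 * 2 ^ m) = 3 * (2 * N / 3) * 2 ^ m := by ring
        _ ≤ 2 * N * 2 ^ m := Nat.mul_le_mul_right _ (Nat.mul_div_le _ _)
        _ = N * 2 ^ (m + 1) := by ring
        _ < 3 ^ (m + 1) := h
        _ = 3 * 3 ^ m := by ring
    calc (langOfWeight N).ncard ≤ (N + 1) * ((langOfWeight (2 * N / 3)).ncard * 3) :=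
          ncard_langOfWeight_le N
      _ ≤ (N + 1) * ((3 * N + 3) ^ m * 3) := by
          gcongr
          exact (ih hM).trans (Nat.pow_le_pow_left (by omega) m)
      _ = (3 * N + 3) ^ (m + 1) := by ring

lemma mul_two_pow_lt_three_pow (N : ℕ) :
    N * 2 ^ (2 * Nat.log 2 N + 2) < 3 ^ (2 * Nat.log 2 N + 2) := by
  set L := Nat.log 2 N
  have hN : N < 2 ^ (L + 1) := Nat.lt_pow_succ_log_self (by norm_num) _
  rw [show 2 * L + 2 = 2 * (L + 1) by ring, pow_mul, pow_mul]
  calc N * (2 ^ 2) ^ (L + 1) < 2 ^ (L + 1) * 4 ^ (L + 1) :=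
        Nat.mul_lt_mul_of_pos_right hN (by positivity)
    _ = 8 ^ (L + 1) := by rw [← mul_pow]; norm_num
    _ ≤ (3 ^ 2) ^ (L + 1) := Nat.pow_le_pow_left (by norm_num) _

lemma Hword_le (n : ℕ) : Hword phiInf n ≤ (9 * n + 3) ^ (2 * Nat.log 2 (3 * n) + 2) := by
  have hsub : {w : List ℕ | w ∈ LyndonLang phiInf ∧ w.length = n} ⊆ langOfWeight (3 * n) :=
    fun w ⟨hw, hl⟩ => ⟨hw, by
      have : w.count 1 ≤ w.length := List.count_le_length
      simp only [weight]
      omega⟩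
  calc Hword phiInf n ≤ (langOfWeight (3 * n)).ncard :=
        Set.ncard_le_ncard hsub (finite_langOfWeight _)
    _ ≤ (3 * (3 * n) + 3) ^ (2 * Nat.log 2 (3 * n) + 2) :=
        ncard_langOfWeight_le_pow (mul_two_pow_lt_three_pow _)
    _ = (9 * n + 3) ^ (2 * Nat.log 2 (3 * n) + 2) := by ring_nf

end Counting

lemma natLog_two_le_two_mul_log (m : ℕ) : (Nat.log 2 m : ℝ) ≤ 2 * Real.log (m + 1) := by
  have hpow : (2 : ℝ) ^ Nat.log 2 m ≤ m + 1 := by exact_mod_cast Nat.pow_log_le_add_one 2 m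
  have hlog : Nat.log 2 m * Real.log 2 ≤ Real.log (m + 1) := by
    rw [← Real.log_pow]
    exact Real.log_le_log (by positivity) hpow
  have := Real.log_two_gt_d9
  have : (0 : ℝ) ≤ Nat.log 2 m := Nat.cast_nonneg _
  nlinarith

lemma log_Hword_le (n : ℕ) : Real.log (Hword phiInf n) ≤ 6 * Real.log (9 * n + 3) ^ 2 := by
  have hn : (0 : ℝ) ≤ n := n.cast_nonneg
  set X : ℝ := 9 * n + 3
  set L := Nat.log 2 (3 * n)
  have hlogX : 1 ≤ Real.log X := by
    rw [Real.le_log_iff_exp_le (by positivity)]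
    linarith [Real.exp_one_lt_d9]
  have hL : (L : ℝ) ≤ 2 * Real.log X := by
    refine (natLog_two_le_two_mul_log _).trans ?_
    gcongr
    push_cast
    linarith
  rcases Nat.eq_zero_or_pos (Hword phiInf n) with h | h
  · rw [h, Nat.cast_zero, Real.log_zero]
    positivity
  calc Real.log (Hword phiInf n) ≤ Real.log (X ^ (2 * L + 2)) := by
        refine Real.log_le_log (by exact_mod_cast h) ?_
        simp only [X, L]
        exact_mod_cast Hword_le n
    _ = (2 * L + 2) * Real.log X := by rw [Real.log_pow]; push_cast; ring
    _ ≤ 6 * Real.log X ^ 2 := by nlinarith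

lemma tendsto_log_sq_div_atTop :
    Tendsto (fun n : ℕ => Real.log (9 * n + 3) ^ 2 / n) atTop (𝓝 0) := by
  have hlin : Tendsto (fun n : ℕ => 9 * (n : ℝ) + 3) atTop atTop :=
    tendsto_atTop_add_const_right _ 3 (tendsto_natCast_atTop_atTop.const_mul_atTop (by norm_num))
  refine ((Real.tendsto_pow_log_div_mul_add_atTop (1 / 9) (-1 / 3) 2 (by norm_num)).comp
    hlin).congr fun n => ?_
  simp only [Function.comp_apply]
  ring_nf

/-- Proposition 5 (2): the Lyndon system `M(φ^∞(1))` has zero entropy. -/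
theorem stmt9 : EntropyIs phiInf 0 := by
  refine squeeze_zero (fun n => div_nonneg (Real.log_natCast_nonneg _) n.cast_nonneg)
    (fun n => ?_) (by simpa using tendsto_log_sq_div_atTop.const_mul 6)
  rw [← mul_div_assoc]
  exact div_le_div_of_nonneg_right (log_Hword_le n) n.cast_nonneg
end

section
/- Say that a real β ≥ 1 is associated to an alternate Lyndon word (d_i)_{i≥1} if the Lyndon system M((d_i)) has topological entropy log β. If β ≥ 1 is associated to at least two distinct alternate Lyndon words, then there exists a periodic (weak) alternate Lyndon word associated to β. -/
open Filter Topology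

/-!
The Lyndon system `M(d)` shrinks when `d` grows in the alternate order, so the number of
words `H_n` and hence the entropy is antitone in `d`. If `d ≺ e` are alternate Lyndon words
first differing at index `k`, take the even `p ∈ {k + 1, k + 2}`; then `f = (e_0 ⋯ e_{p-1})^∞`
satisfies `d ≺ f ⪯ e`, and it is again an alternate Lyndon word: a shift of `f` below `f`
would produce a shift of `e` below `e`, except when `e_0 ⋯ e_{p-1}` has a border of even
length, and such a border would produce a shift of `d` below `d`. By the squeeze, `f` has
the entropy shared by `d` and `e`.
-/

/-- The alternate order is the lexicographic order after negating the even-indexed letters. -/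
def altKey (x : ℕ → ℕ) : Lex (ℕ → ℤ) :=
  toLex fun i => if Even i then -(x i : ℤ) else x i

theorem altLt_iff_altKey_lt {x y : ℕ → ℕ} : altLt x y ↔ altKey x < altKey y := by
  refine exists_congr fun k => and_congr (forall₂_congr fun i _ => ?_) ?_
  · simp only [altKey, Pi.toLex_apply]
    split_ifs <;> simp
  · simp only [altKey, Pi.toLex_apply]
    split_ifs <;> simp

theorem altKey_injective : Function.Injective altKey := by
  intro x y h
  funext i
  have hi := congrFun (congrArg ofLex h) i
  simp only [altKey, ofLex_toLex] at hi
  split_ifs at hi <;> simpa using hi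

theorem altLe_iff_altKey_le {x y : ℕ → ℕ} : altLe x y ↔ altKey x ≤ altKey y := by
  rw [altLe, altLt_iff_altKey_lt, ← altKey_injective.eq_iff]
  exact le_iff_eq_or_lt.symm

theorem altLt_or_altLt_of_ne {x y : ℕ → ℕ} (h : x ≠ y) : altLt x y ∨ altLt y x := by
  rw [altLt_iff_altKey_lt, altLt_iff_altKey_lt]
  exact lt_or_gt_of_ne (altKey_injective.ne h)

theorem altLe_trans {x y z : ℕ → ℕ} (hxy : altLe x y) (hyz : altLe y z) : altLe x z := by
  rw [altLe_iff_altKey_le] at *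
  exact hxy.trans hyz

theorem altLe_of_not_altLt {x y : ℕ → ℕ} (h : ¬ altLt y x) : altLe x y := by
  rw [altLe_iff_altKey_le]
  rw [altLt_iff_altKey_lt] at h
  exact not_lt.mp h

theorem IsAltLyndon.not_altLt_shiftSeq {x : ℕ → ℕ} (hx : IsAltLyndon x) (j : ℕ) :
    ¬ altLt (shiftSeq x j) x := by
  rw [altLt_iff_altKey_lt]
  exact not_lt.mpr (altLe_iff_altKey_le.mp (hx j))

theorem head_le_of_altLe {x y : ℕ → ℕ} (h : altLe x y) : y 0 ≤ x 0 := by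
  rcases h with rfl | ⟨k, hagree, hk⟩
  · rfl
  · rcases Nat.eq_zero_or_pos k with rfl | hk0
    · simpa using hk.le
    · exact (hagree 0 hk0).ge

theorem shiftSeq_zero (x : ℕ → ℕ) : shiftSeq x 0 = x :=
  funext fun i => congrArg x (zero_add i)

theorem shiftSeq_shiftSeq (x : ℕ → ℕ) (a b : ℕ) :
    shiftSeq (shiftSeq x a) b = shiftSeq x (a + b) :=
  funext fun i => congrArg x (add_assoc a b i).symm

def AltLtAt (x y : ℕ → ℕ) (k : ℕ) : Prop :=
  (∀ i < k, x i = y i) ∧ (if Even k then y k < x k else x k < y k)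

namespace AltLtAt

variable {x y x' y' : ℕ → ℕ} {j k : ℕ}

theorem altLt (h : AltLtAt x y k) : altLt x y := ⟨k, h⟩

theorem ne (h : AltLtAt x y k) : x k ≠ y k := by
  obtain ⟨-, hk⟩ := h
  split_ifs at hk <;> omega

theorem congr_prefix (h : AltLtAt x y k) (hx : ∀ i ≤ k, x' i = x i)
    (hy : ∀ i ≤ k, y' i = y i) :
    AltLtAt x' y' k := by
  obtain ⟨hagree, hk⟩ := h
  refine ⟨fun i hi => by rw [hx i hi.le, hy i hi.le, hagree i hi], ?_⟩
  rwa [hx k le_rfl, hy k le_rfl]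

theorem shiftSeq_of_even (h : AltLtAt x y k) (hj : Even j) (hjk : j ≤ k) :
    AltLtAt (shiftSeq x j) (shiftSeq y j) (k - j) := by
  obtain ⟨hagree, hk⟩ := h
  refine ⟨fun i hi => hagree (j + i) (by omega), ?_⟩
  have hpar : Even (k - j) ↔ Even k := by simp [Nat.even_sub hjk, hj]
  simpa only [shiftSeq, Nat.add_sub_cancel' hjk, hpar] using hk

theorem shiftSeq_of_odd (h : AltLtAt x y k) (hj : Odd j) (hjk : j ≤ k) :
    AltLtAt (shiftSeq y j) (shiftSeq x j) (k - j) := by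
  obtain ⟨hagree, hk⟩ := h
  refine ⟨fun i hi => (hagree (j + i) (by omega)).symm, ?_⟩
  have hpar : Even (k - j) ↔ ¬ Even k := by simp [Nat.even_sub hjk, Nat.not_even_iff_odd.mpr hj]
  simp only [shiftSeq, Nat.add_sub_cancel' hjk, hpar]
  split_ifs at hk ⊢ <;> omega

theorem no_even_border {d e : ℕ → ℕ} {p s : ℕ} (hd : IsAltLyndon d) (h : AltLtAt d e k)
    (hp : Even p) (hkp : k < p) (hpk : p ≤ k + 2) (hs0 : 0 < s) (hsp : s < p) (hs : Even s) :
    ¬ ∀ i < s, e (p - s + i) = e i := by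
  intro hborder
  have hj : Even (p - s) := (Nat.even_sub hsp.le).mpr (iff_of_true hp hs)
  have hjk : p - s ≤ k := by obtain ⟨t, rfl⟩ := hs; omega
  refine hd.not_altLt_shiftSeq (p - s) ((h.shiftSeq_of_even hj hjk).congr_prefix
    (fun _ _ => rfl) fun i hi => ?_).altLt
  rw [h.1 i (by omega)]
  exact (hborder i (by omega)).symm

end AltLtAt

def periodize (x : ℕ → ℕ) (p : ℕ) : ℕ → ℕ := fun i => x (i % p)

section periodize

variable {x : ℕ → ℕ} {p : ℕ}

theorem periodize_apply_of_lt {i : ℕ} (hi : i < p) : periodize x p i = x i :=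
  congrArg x (Nat.mod_eq_of_lt hi)

theorem periodize_add_period (i : ℕ) : periodize x p (i + p) = periodize x p i :=
  congrArg x (Nat.add_mod_right i p)

theorem shiftSeq_periodize_self : shiftSeq (periodize x p) p = periodize x p :=
  funext fun i => congrArg x (Nat.add_mod_left p i)

theorem shiftSeq_periodize_mod (q : ℕ) :
    shiftSeq (periodize x p) q = shiftSeq (periodize x p) (q % p) :=
  funext fun i => congrArg x (Nat.mod_add_mod q p i).symm

theorem shiftSeq_periodize_apply_mod (j i : ℕ) :
    shiftSeq (periodize x p) j (i % p) = shiftSeq (periodize x p) j i :=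
  congrArg x (Nat.add_mod_mod j i p)

theorem altLe_periodize (hx : IsAltLyndon x) (hp : Even p) (hp0 : 0 < p) :
    altLe (periodize x p) x := by
  refine altLe_of_not_altLt ?_
  rintro ⟨m, hm : AltLtAt _ _ m⟩
  have hpm : p ≤ m := by
    by_contra! hmp
    exact hm.ne (periodize_apply_of_lt hmp).symm
  have hshift := hm.shiftSeq_of_even hp hpm
  rw [shiftSeq_periodize_self] at hshift
  exact hx.not_altLt_shiftSeq p
    (hshift.congr_prefix (fun _ _ => rfl) fun i _ => hm.1 i (by omega)).altLt

theorem isAltLyndon_periodize (hx : IsAltLyndon x) (hp : 0 < p)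
    (hborder : ∀ s, 0 < s → s < p → Even s → ¬ ∀ i < s, x (p - s + i) = x i) :
    IsAltLyndon (periodize x p) := by
  intro q
  rw [shiftSeq_periodize_mod]
  set j := q % p
  have hjp : j < p := Nat.mod_lt q hp
  rcases Nat.eq_zero_or_pos j with hj | hj
  · rw [hj, shiftSeq_zero]
    exact Or.inl rfl
  refine altLe_of_not_altLt ?_
  rintro ⟨m, hm : AltLtAt _ _ m⟩
  have hmp : m < p := by
    by_contra! hpm
    have hself : shiftSeq (periodize x p) j = periodize x p := funext fun i => by
      rw [← shiftSeq_periodize_apply_mod, hm.1 _ ((Nat.mod_lt i hp).trans_le hpm)]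
      exact congrArg x (Nat.mod_mod i p)
    exact hm.ne (by rw [hself])
  rcases lt_or_ge m (p - j) with hms | hms
  · refine hx.not_altLt_shiftSeq j (hm.congr_prefix (fun i hi => ?_) fun i hi => ?_).altLt
    · exact (periodize_apply_of_lt (x := x) (i := j + i) (by omega)).symm
    · exact (periodize_apply_of_lt (x := x) (by omega)).symm
  have hprefix : ∀ i < p - j, x (p - (p - j) + i) = x i := fun i hi => by
    have := hm.1 i (by omega)
    rwa [shiftSeq, periodize_apply_of_lt (by omega), periodize_apply_of_lt (by omega),
      ← Nat.sub_sub_self hjp.le] at this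
  rcases Nat.even_or_odd (p - j) with hs | hs
  · exact hborder (p - j) (by omega) (by omega) hs hprefix
  have hshift := hm.shiftSeq_of_odd hs hms
  rw [shiftSeq_shiftSeq, Nat.add_sub_cancel' hjp.le, shiftSeq_periodize_self] at hshift
  refine hx.not_altLt_shiftSeq (p - j) (hshift.congr_prefix (fun i hi => ?_) fun i hi => ?_).altLt
  · exact (periodize_apply_of_lt (x := x) (i := p - j + i) (by omega)).symm
  · exact (periodize_apply_of_lt (x := x) (by omega)).symm

end periodize

theorem exists_periodic_altLyndon_between {d e : ℕ → ℕ} (hd : IsAltLyndon d)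
    (he : IsAltLyndon e) (hlt : altLt d e) :
    ∃ f : ℕ → ℕ, IsAltLyndon f ∧ (∃ p : ℕ, 1 ≤ p ∧ ∀ i, f (i + p) = f i) ∧
      altLt d f ∧ altLe f e := by
  obtain ⟨k, hk : AltLtAt d e k⟩ := hlt
  set p := 2 * (k / 2 + 1)
  have hp : Even p := even_two_mul _
  refine ⟨periodize e p, ?_, ⟨p, by omega, periodize_add_period⟩, ?_,
    altLe_periodize he hp (by omega)⟩
  · exact isAltLyndon_periodize he (by omega) fun s hs0 hsp hs =>
      hk.no_even_border hd hp (by omega) (by omega) hs0 hsp hs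
  · exact (hk.congr_prefix (fun _ _ => rfl) fun i _ => periodize_apply_of_lt (by omega)).altLt

theorem lyndonSystem_anti {d e : ℕ → ℕ} (h : altLe d e) : LyndonSystem e ⊆ LyndonSystem d :=
  fun _ ⟨hx0, hxs⟩ =>
    ⟨fun i => (hx0 i).trans (head_le_of_altLe h), fun k => altLe_trans h (hxs k)⟩

theorem lyndonLang_anti {d e : ℕ → ℕ} (h : altLe d e) : LyndonLang e ⊆ LyndonLang d :=
  fun _ ⟨x, hx, hw⟩ => ⟨x, lyndonSystem_anti h hx, hw⟩

theorem finite_lyndonLang_length (d : ℕ → ℕ) (n : ℕ) :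
    {w : List ℕ | w ∈ LyndonLang d ∧ w.length = n}.Finite := by
  refine ((List.finite_length_eq (Fin (d 0 + 1)) n).image (List.map Fin.val)).subset ?_
  rintro w ⟨⟨x, ⟨hx0, -⟩, k, hw⟩, rfl⟩
  refine ⟨(List.range w.length).map fun i => ⟨x (k + i), Nat.lt_succ_of_le (hx0 _)⟩,
    by simp, ?_⟩
  simpa [List.map_map, Function.comp_def] using hw.symm

theorem hword_anti {d e : ℕ → ℕ} (h : altLe d e) (n : ℕ) : Hword e n ≤ Hword d n :=
  Set.ncard_le_ncard (fun _ hw => ⟨lyndonLang_anti h hw.1, hw.2⟩) (finite_lyndonLang_length d n)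

theorem log_natCast_monotone : Monotone fun n : ℕ => Real.log n := by
  intro a b hab
  rcases Nat.eq_zero_or_pos a with rfl | ha
  · simpa using Real.log_natCast_nonneg b
  · exact Real.log_le_log (by exact_mod_cast ha) (by exact_mod_cast hab)

theorem entropyIs_of_altLe_of_altLe {d e f : ℕ → ℕ} {h : ℝ} (hdf : altLe d f)
    (hfe : altLe f e) (hd : EntropyIs d h) (he : EntropyIs e h) : EntropyIs f h := by
  refine tendsto_of_tendsto_of_tendsto_of_le_of_le he hd (fun n => ?_) fun n => ?_
  · exact div_le_div_of_nonneg_right (log_natCast_monotone (hword_anti hfe n)) n.cast_nonneg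
  · exact div_le_div_of_nonneg_right (log_natCast_monotone (hword_anti hdf n)) n.cast_nonneg

theorem stmt17_general (β : ℝ) (d e : ℕ → ℕ)
    (hd : IsAltLyndon d) (he : IsAltLyndon e) (hne : d ≠ e)
    (hdE : EntropyIs d (Real.log β)) (heE : EntropyIs e (Real.log β)) :
    ∃ f : ℕ → ℕ, IsAltLyndon f ∧ (∃ p : ℕ, 1 ≤ p ∧ ∀ i, f (i + p) = f i) ∧
      EntropyIs f (Real.log β) := by
  wlog hlt : altLt d e generalizing d e
  · exact this e d he hd hne.symm heE hdE ((altLt_or_altLt_of_ne hne).resolve_left hlt)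
  obtain ⟨f, hf, hper, hdf, hfe⟩ := exists_periodic_altLyndon_between hd he hlt
  exact ⟨f, hf, hper, entropyIs_of_altLe_of_altLe (Or.inr hdf) hfe hdE heE⟩

/-- Proposition 9: if `β ≥ 1` is associated to two distinct alternate Lyndon words,
then some periodic (weak) alternate Lyndon word is associated to `β`. -/
theorem stmt17 (β : ℝ) (hβ : 1 ≤ β) (d e : ℕ → ℕ)
    (hd : IsAltLyndon d) (he : IsAltLyndon e) (hne : d ≠ e)
    (hdE : EntropyIs d (Real.log β)) (heE : EntropyIs e (Real.log β)) :
    ∃ f : ℕ → ℕ, IsAltLyndon f ∧ (∃ p : ℕ, 1 ≤ p ∧ ∀ i, f (i + p) = f i) ∧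
      EntropyIs f (Real.log β) :=
  stmt17_general β d e hd he hne hdE heE
end
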